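/- Let G be a finite group whose power graph P(G) is C_4-free, suppose |G| is not a prime power, and suppose the center Z(G) is an elementary abelian p-group of order greater than p (p prime). Then for every prime q ≠ p and every nontrivial q-element x ∈ G, the primes dividing |C_G(x)| are exactly p and q; moreover, if the order of x is greater than q, then every Sylow p-subgroup of C_G(x) has exponent p, the Sylow q-subgroup of C_G(x) is cyclic (say equal to ⟨y⟩) and normal in C_G(x), and the index [C_G(x) : C_{C_G(x)}(y)] is either 1 or p. -/

import Mathlib

/-- Adjacency in the power graph of a group: two distinct elements are adjacent
iff one is a power of the other. -/
def pgAdj {G : Type*} [Group G] (x y : G) : Prop :=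
  x ≠ y ∧ (x ∈ Subgroup.zpowers y ∨ y ∈ Subgroup.zpowers x)

/-- The power graph contains an induced 4-cycle. -/
def pgHasInducedC4 (G : Type*) [Group G] : Prop :=
  ∃ x u y v : G,
    x ≠ u ∧ x ≠ y ∧ x ≠ v ∧ u ≠ y ∧ u ≠ v ∧ y ≠ v ∧
    pgAdj x u ∧ pgAdj u y ∧ pgAdj y v ∧ pgAdj v x ∧
    ¬ pgAdj x y ∧ ¬ pgAdj u v

/-- The power graph is `C₄`-free. -/
def pgC4Free (G : Type*) [Group G] : Prop := ¬ pgHasInducedC4 G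

/-!
Everything takes place in `C = C_G(x)`, where `x` is central, and so are two elements
`z₁, z₂ ∈ Z(G)` of order `p` generating different subgroups. The `C₄`-freeness is used in one form: if `a` and
`b` are not powers of each other and both lie in `⟨u⟩ ∩ ⟨v⟩`, then one of `u, v` is a power of the
other. For `u = z g₁`, `v = z g₂` with `z` commuting with `g₁, g₂` and of coprime order, this
makes `g₁, g₂` comparable as soon as `⟨g₁⟩ ∩ ⟨g₂⟩ ∋ a ≠ 1`. Applied with `z` of prime order
`s ∉ {p, q}` to `x z₁, x z₂` it would make `z₁, z₂` comparable; applied with `z = x` to `w` and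
`w zᵢ`, for `w` of order `p²`, it puts `z₁, z₂` in the same cyclic group; and when `|x| ≥ q²`,
applied with `z = z₁`, it makes all `q`-elements of `C` (which all contain the element of order
`q` of `⟨x⟩`) pairwise comparable, so they form the cyclic normal Sylow `q`-subgroup `⟨y⟩`.
Finally `C / C_C(y)` embeds in `Aut ⟨y⟩ ≅ (ℤ/q^b)ˣ`; having order prime to `q`, it embeds in the
cyclic group `(ℤ/q)ˣ`, and since `C` has no element of order `p²` its order is `1` or `p`.
-/

open Subgroup

section Cyclic

variable {G : Type*} [Group G]

theorem mem_zpowers_of_orderOf_dvd [Finite G] {u a b : G} (ha : a ∈ zpowers u)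
    (hb : b ∈ zpowers u) (hab : orderOf a ∣ orderOf b) : a ∈ zpowers b := by
  obtain ⟨i, rfl⟩ : ∃ i : ℕ, u ^ i = a :=
    (isOfFinOrder_of_finite u).mem_powers_iff_mem_zpowers.mpr ha
  obtain ⟨j, rfl⟩ : ∃ j : ℕ, u ^ j = b :=
    (isOfFinOrder_of_finite u).mem_powers_iff_mem_zpowers.mpr hb
  have hN : 0 < orderOf u := orderOf_pos u
  have hgcd : u ^ (orderOf u).gcd j ∈ zpowers (u ^ j) := by
    refine mem_zpowers_iff.mpr ⟨(orderOf u).gcdB j, ?_⟩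
    rw [← zpow_natCast u j, ← zpow_mul, ← zpow_natCast u ((orderOf u).gcd j),
      Nat.gcd_eq_gcd_ab, zpow_add, zpow_mul u (orderOf u : ℤ), zpow_natCast u (orderOf u),
      pow_orderOf_eq_one, one_zpow, one_mul]
  have hdvd : (orderOf u).gcd j ∣ i := by
    have hpow : (u ^ i) ^ (orderOf u / (orderOf u).gcd j) = 1 := by
      rw [← orderOf_dvd_iff_pow_eq_one]
      exact hab.trans (by rw [orderOf_pow])
    rw [← pow_mul, ← orderOf_dvd_iff_pow_eq_one] at hpow
    refine Nat.dvd_of_mul_dvd_mul_right (Nat.div_pos (Nat.le_of_dvd hN (Nat.gcd_dvd_left _ j))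
      (Nat.gcd_pos_of_pos_left j hN)) ?_
    rwa [Nat.mul_div_cancel' (Nat.gcd_dvd_left _ j)]
  obtain ⟨k, rfl⟩ := hdvd
  rw [pow_mul]
  exact zpowers_le_of_mem hgcd (npow_mem_zpowers _ k)

theorem Commute.mem_zpowers_mul_left {a b : G} (hab : Commute a b)
    (hcop : (orderOf a).Coprime (orderOf b)) : a ∈ zpowers (a * b) := by
  have ha : a ∈ zpowers (a ^ orderOf b) := mem_zpowers_pow_iff.mpr hcop.symm
  rw [← mul_one (a ^ orderOf b), ← pow_orderOf_eq_one b, ← hab.mul_pow] at ha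
  exact zpowers_le_of_mem (npow_mem_zpowers _ _) ha

theorem Commute.mem_zpowers_mul_right {a b : G} (hab : Commute a b)
    (hcop : (orderOf a).Coprime (orderOf b)) : b ∈ zpowers (a * b) :=
  hab.eq ▸ hab.symm.mem_zpowers_mul_left hcop.symm

theorem mem_zpowers_map_iff {H : Type*} [Group H] {f : H →* G} (hf : Function.Injective f)
    {a b : H} : f a ∈ zpowers (f b) ↔ a ∈ zpowers b := by
  rw [← MonoidHom.map_zpowers, mem_map_iff_mem hf]

theorem commute_of_mem_center {z : G} (hz : z ∈ center G) (g : G) : Commute z g :=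
  (mem_center_iff.mp hz g).symm

theorem Subgroup.mk_mem_center {H : Subgroup G} {z : G} (hz : z ∈ center G)
    (hzH : z ∈ H) : (⟨z, hzH⟩ : H) ∈ center H :=
  mem_center_iff.mpr fun g ↦ Subtype.ext (mem_center_iff.mp hz g)

theorem Subgroup.mk_mem_center_centralizer (x : G) :
    (⟨x, mem_centralizer_singleton_iff.mpr rfl⟩ : centralizer {x}) ∈ center (centralizer {x}) :=
  mem_center_iff.mpr fun g ↦ Subtype.ext (mem_centralizer_singleton_iff.mp g.2)

end Cyclic

section PowerGraph

variable {G : Type*} [Group G]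

def PowComparable (a b : G) : Prop := a ∈ zpowers b ∨ b ∈ zpowers a

theorem powComparable_map_iff {H : Type*} [Group H] {f : H →* G} (hf : Function.Injective f)
    {a b : H} : PowComparable (f a) (f b) ↔ PowComparable a b := by
  simp only [PowComparable, mem_zpowers_map_iff hf]

theorem not_powComparable_of_coprime {a b : G} (ha : a ≠ 1) (hb : b ≠ 1)
    (hcop : (orderOf a).Coprime (orderOf b)) : ¬ PowComparable a b := by
  rintro (hab | hba)
  · exact ha (orderOf_eq_one_iff.mp (hcop.eq_one_of_dvd (orderOf_dvd_of_mem_zpowers hab)))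
  · exact hb (orderOf_eq_one_iff.mp
      (hcop.symm.eq_one_of_dvd (orderOf_dvd_of_mem_zpowers hba)))

theorem pgAdj_map_iff {H : Type*} [Group H] {f : H →* G} (hf : Function.Injective f) {a b : H} :
    pgAdj (f a) (f b) ↔ pgAdj a b :=
  and_congr hf.ne_iff (powComparable_map_iff hf)

theorem pgC4Free.of_injective {H : Type*} [Group H] {f : H →* G} (hf : Function.Injective f)
    (h : pgC4Free G) : pgC4Free H := by
  rintro ⟨x, u, y, v, hxu, hxy, hxv, huy, huv, hyv, a₁, a₂, a₃, a₄, n₁, n₂⟩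
  simp only [← pgAdj_map_iff hf, ← hf.ne_iff] at *
  exact h ⟨f x, f u, f y, f v, hxu, hxy, hxv, huy, huv, hyv, a₁, a₂, a₃, a₄, n₁, n₂⟩

theorem pgC4Free.powComparable_of_mem_zpowers (h : pgC4Free G) {a b u v : G}
    (hab : ¬ PowComparable a b) (hau : a ∈ zpowers u) (hbu : b ∈ zpowers u)
    (hav : a ∈ zpowers v) (hbv : b ∈ zpowers v) : PowComparable u v := by
  by_contra huv
  have ne_of_not {c d : G} (hcd : ¬ PowComparable c d) : c ≠ d := by
    rintro rfl
    exact hcd (Or.inl (mem_zpowers c))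
  have hau' : a ≠ u := by rintro rfl; exact hab (Or.inr hbu)
  have hbu' : u ≠ b := by rintro rfl; exact hab (Or.inl hau)
  have hav' : a ≠ v := by rintro rfl; exact hab (Or.inr hbv)
  have hbv' : b ≠ v := by rintro rfl; exact hab (Or.inl hav)
  exact h ⟨a, u, b, v, hau', ne_of_not hab, hav', hbu', ne_of_not huv, hbv',
    ⟨hau', Or.inl hau⟩, ⟨hbu', Or.inr hbu⟩, ⟨hbv', Or.inl hbv⟩, ⟨hav'.symm, Or.inr hav⟩,
    fun hadj ↦ hab hadj.2, fun hadj ↦ huv hadj.2⟩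

variable [Finite G]

theorem mem_zpowers_of_mul_mem_zpowers_mul {x y₁ y₂ : G} (h₁ : Commute x y₁) (h₂ : Commute x y₂)
    (hcop₁ : (orderOf x).Coprime (orderOf y₁)) (hcop₂ : (orderOf x).Coprime (orderOf y₂))
    (hmem : x * y₁ ∈ zpowers (x * y₂)) : y₁ ∈ zpowers y₂ := by
  refine mem_zpowers_of_orderOf_dvd (zpowers_le_of_mem hmem (h₁.mem_zpowers_mul_right hcop₁))
    (h₂.mem_zpowers_mul_right hcop₂) (hcop₁.symm.dvd_of_dvd_mul_left ?_)
  rw [← h₂.orderOf_mul_eq_mul_orderOf_of_coprime hcop₂]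
  exact orderOf_dvd_of_mem_zpowers (zpowers_le_of_mem hmem (h₁.mem_zpowers_mul_right hcop₁))

theorem PowComparable.of_mul_left {x y₁ y₂ : G} (h₁ : Commute x y₁) (h₂ : Commute x y₂)
    (hcop₁ : (orderOf x).Coprime (orderOf y₁)) (hcop₂ : (orderOf x).Coprime (orderOf y₂))
    (h : PowComparable (x * y₁) (x * y₂)) : PowComparable y₁ y₂ :=
  h.imp (mem_zpowers_of_mul_mem_zpowers_mul h₁ h₂ hcop₁ hcop₂)
    (mem_zpowers_of_mul_mem_zpowers_mul h₂ h₁ hcop₂ hcop₁)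

theorem pgC4Free.powComparable_of_mem_zpowers_of_coprime (h : pgC4Free G) {z a g₁ g₂ : G}
    (hz : z ≠ 1) (ha : a ≠ 1) (hz₁ : Commute z g₁) (hz₂ : Commute z g₂)
    (hcop₁ : (orderOf z).Coprime (orderOf g₁)) (hcop₂ : (orderOf z).Coprime (orderOf g₂))
    (ha₁ : a ∈ zpowers g₁) (ha₂ : a ∈ zpowers g₂) : PowComparable g₁ g₂ := by
  have hza : ¬ PowComparable z a :=
    not_powComparable_of_coprime hz ha (hcop₁.coprime_dvd_right (orderOf_dvd_of_mem_zpowers ha₁))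
  refine PowComparable.of_mul_left hz₁ hz₂ hcop₁ hcop₂ (h.powComparable_of_mem_zpowers hza
    (hz₁.mem_zpowers_mul_left hcop₁) ?_ (hz₂.mem_zpowers_mul_left hcop₂) ?_)
  · exact zpowers_le_of_mem (hz₁.mem_zpowers_mul_right hcop₁) ha₁
  · exact zpowers_le_of_mem (hz₂.mem_zpowers_mul_right hcop₂) ha₂

theorem pgC4Free.mem_zpowers_of_pow_eq_one (h : pgC4Free G) {r k : ℕ} (hr : 1 < r) (hk : 2 ≤ k)
    {w a z : G} (hw : orderOf w = r ^ k) (ha : a ^ r = 1) (hwa : Commute w a) (hz : z ≠ 1)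
    (hzw : Commute z w) (hza : Commute z a) (hzr : (orderOf z).Coprime r) : a ∈ zpowers w := by
  have ha_pow {m : ℕ} (hm : m ≠ 0) : a ^ r ^ m = 1 := by
    rw [← orderOf_dvd_iff_pow_eq_one]
    exact (orderOf_dvd_of_pow_eq_one ha).trans (dvd_pow_self r hm)
  have hc : w ^ r ^ (k - 1) ≠ 1 :=
    pow_ne_one_of_lt_orderOf (by positivity) (hw ▸ Nat.pow_lt_pow_right hr (by omega))
  have hc_mem : w ^ r ^ (k - 1) ∈ zpowers (w * a) := by
    rw [← mul_one (w ^ _), ← ha_pow (by omega : k - 1 ≠ 0), ← hwa.mul_pow]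
    exact npow_mem_zpowers _ _
  have hwa_dvd : orderOf (w * a) ∣ orderOf w := by
    rw [hw, orderOf_dvd_iff_pow_eq_one, hwa.mul_pow, ← hw, pow_orderOf_eq_one, one_mul,
      hw, ha_pow (by omega)]
  have hmem : w * a ∈ zpowers w :=
    (h.powComparable_of_mem_zpowers_of_coprime hz hc hzw (hzw.mul_right hza)
      (hw ▸ hzr.pow_right k) ((hw ▸ hzr.pow_right k).coprime_dvd_right hwa_dvd)
      (npow_mem_zpowers _ _) hc_mem).elim
      (fun hw_mem ↦ mem_zpowers_of_orderOf_dvd (mem_zpowers _) hw_mem hwa_dvd) id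
  simpa using mul_mem (inv_mem (mem_zpowers w)) hmem

end PowerGraph

section Sylow

variable {G : Type*} [Group G]

theorem IsPGroup.exists_orderOf_eq_pow_of_mem {q : ℕ} [Fact q.Prime] {H : Subgroup G}
    (hH : IsPGroup q H) {g : G} (hg : g ∈ H) : ∃ m, orderOf g = q ^ m := by
  obtain ⟨m, hm⟩ := IsPGroup.iff_orderOf.mp hH ⟨g, hg⟩
  exact ⟨m, (Subgroup.orderOf_mk g hg).symm.trans hm⟩

theorem isCyclic_of_forall_powComparable [Finite G] (h : ∀ a b : G, PowComparable a b) :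
    IsCyclic G := by
  obtain ⟨g, hg⟩ := Finite.exists_max (orderOf : G → ℕ)
  refine isCyclic_iff_exists_zpowers_eq_top.mpr ⟨g, eq_top_iff.mpr fun a _ ↦ ?_⟩
  refine (h a g).elim id fun hga ↦ mem_zpowers_of_orderOf_dvd (mem_zpowers a) hga ?_
  rw [Nat.le_antisymm (Nat.le_of_dvd (orderOf_pos a) (orderOf_dvd_of_mem_zpowers hga)) (hg a)]

variable {q : ℕ} [Fact q.Prime]

variable (hcomp : ∀ g₁ g₂ : G, (∃ m, orderOf g₁ = q ^ m) → (∃ m, orderOf g₂ = q ^ m) →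
  PowComparable g₁ g₂)
include hcomp

theorem Sylow.mem_of_forall_powComparable (S : Sylow q G) {g : G} (hg : ∃ m, orderOf g = q ^ m) :
    g ∈ S := by
  have hdvd {a b : G} (hb : ∃ m, orderOf b = q ^ m) (hab : orderOf a ∣ orderOf b) :
      ∃ m, orderOf a = q ^ m := by
    obtain ⟨m, hm⟩ := hb
    obtain ⟨i, -, hi⟩ := (Nat.dvd_prime_pow Fact.out).mp (hm ▸ hab)
    exact ⟨i, hi⟩
  -- comparability makes the `q`-elements a subgroup, a `q`-group containing `S`
  let Q : Subgroup G :=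
    { carrier := {g | ∃ m, orderOf g = q ^ m}
      mul_mem' := fun {a b} ha hb ↦ (hcomp a b ha hb).elim
        (fun hab ↦ hdvd hb (orderOf_dvd_of_mem_zpowers (mul_mem hab (mem_zpowers b))))
        (fun hba ↦ hdvd ha (orderOf_dvd_of_mem_zpowers (mul_mem (mem_zpowers a) hba)))
      one_mem' := ⟨0, by rw [orderOf_one, pow_zero]⟩
      inv_mem' := fun {a} ha ↦ by simpa only [Set.mem_ofPred_eq, orderOf_inv] using ha }
  have hQ : IsPGroup q Q := IsPGroup.iff_orderOf.mpr fun g ↦ by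
    obtain ⟨m, hm⟩ := g.2
    exact ⟨m, (Subgroup.orderOf_coe g).symm.trans hm⟩
  have hSQ : (S : Subgroup G) ≤ Q := fun g hg ↦ S.isPGroup'.exists_orderOf_eq_pow_of_mem hg
  show g ∈ (S : Subgroup G)
  rw [← S.is_maximal' hQ hSQ]
  exact hg

theorem Sylow.normal_of_forall_powComparable (S : Sylow q G) : (S : Subgroup G).Normal := by
  have : Subsingleton (Sylow q G) := ⟨fun S₁ S₂ ↦ Sylow.ext <| S₂.is_maximal' S₁.isPGroup'
    fun g hg ↦ S₁.mem_of_forall_powComparable hcomp (S₂.isPGroup'.exists_orderOf_eq_pow_of_mem hg)⟩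
  exact S.normal_of_subsingleton

theorem Sylow.isCyclic_of_forall_powComparable [Finite G] (S : Sylow q G) :
    IsCyclic (S : Subgroup G) :=
  _root_.isCyclic_of_forall_powComparable fun (a b : (S : Subgroup G)) ↦
    (powComparable_map_iff (S : Subgroup G).subtype_injective).mp <|
    hcomp _ _ (S.isPGroup'.exists_orderOf_eq_pow_of_mem a.2)
      (S.isPGroup'.exists_orderOf_eq_pow_of_mem b.2)

end Sylow

theorem IsPGroup.exponent_eq_of_not_sq_dvd {G : Type*} [Group G] [Nontrivial G] {p : ℕ}
    (hp : p.Prime) (hG : IsPGroup p G) (h : ∀ g : G, ¬ p ^ 2 ∣ orderOf g) :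
    Monoid.exponent G = p := by
  have := Fact.mk hp
  refine (Monoid.exponent_eq_prime_iff hp).mpr fun g hg ↦ ?_
  obtain ⟨k, hk⟩ := IsPGroup.iff_orderOf.mp hG g
  match k, hk with
  | 0, hk => exact absurd (orderOf_eq_one_iff.mp (by rw [hk, pow_zero])) hg
  | 1, hk => rw [hk, pow_one]
  | k + 2, hk => exact absurd (hk ▸ pow_dvd_pow p (by omega)) (h g)

theorem Sylow.exponent_eq_of_not_sq_dvd {G : Type*} [Group G] [Finite G] {p : ℕ} [Fact p.Prime]
    (P : Sylow p G) (hpG : p ∣ Nat.card G) (h : ∀ g : G, ¬ p ^ 2 ∣ orderOf g) :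
    Monoid.exponent (P : Subgroup G) = p :=
  have : Nontrivial (P : Subgroup G) := (nontrivial_iff_ne_bot _).mpr (P.ne_bot_of_dvd_card hpG)
  P.isPGroup'.exponent_eq_of_not_sq_dvd Fact.out fun g ↦ Subgroup.orderOf_coe g ▸ h g

theorem Nat.eq_one_or_eq_of_not_sq_dvd {n p : ℕ} (hn : n ≠ 0)
    (h : ∀ {d : ℕ}, d.Prime → d ∣ n → d = p) (hsq : ¬ p ^ 2 ∣ n) : n = 1 ∨ n = p := by
  rw [Nat.eq_prime_pow_of_unique_prime_dvd hn h] at hsq ⊢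
  generalize n.primeFactorsList.length = k at hsq ⊢
  match k with
  | 0 => exact Or.inl (pow_zero p)
  | 1 => exact Or.inr (pow_one p)
  | k + 2 => exact absurd (pow_dvd_pow p (by omega)) hsq

theorem ZMod.isCyclic_subgroup_units_of_coprime {n q b : ℕ} [Fact q.Prime] (hn : n = q ^ b)
    (H : Subgroup (ZMod n)ˣ) (hH : (Nat.card H).Coprime q) : IsCyclic H := by
  subst hn
  rcases b with _ | b
  · have : Subsingleton (ZMod (q ^ 0))ˣ := by rw [pow_zero]; infer_instance
    exact isCyclic_of_subsingleton
  have hq : q ∣ q ^ (b + 1) := dvd_pow_self q b.succ_ne_zero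
  -- reduction mod `q` is injective on `H`: a unit `≡ 1 mod q` of order prime to `q` is `1`
  refine isCyclic_of_injective ((ZMod.unitsMap hq).comp H.subtype) ?_
  refine (injective_iff_map_eq_one _).mpr fun r hr ↦ Subtype.ext (Units.ext ?_)
  set u : ZMod (q ^ (b + 1)) := ((r : (ZMod (q ^ (b + 1)))ˣ) : ZMod (q ^ (b + 1)))
  have hord : (orderOf u).Coprime (q ^ (b + 1)) := by
    rw [orderOf_units, Subgroup.orderOf_coe]
    exact (hH.coprime_dvd_left (orderOf_dvd_natCard r)).pow_right _
  refine (ZMod.eq_one_or_isUnit_sub_one rfl _ hord).resolve_right fun hu ↦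
    not_isUnit_zero (M₀ := ZMod q) ?_
  have hr' : ZMod.castHom hq (ZMod q) u = 1 := congr_arg Units.val hr
  simpa only [map_sub, map_one, hr', sub_self] using hu.map (ZMod.castHom hq (ZMod q))

theorem exists_monoidHom_zmod_units_ker_eq_centralizer {G : Type*} [Group G] (y : G)
    [(zpowers y).Normal] :
    ∃ f : G →* (ZMod (Nat.card (zpowers y)))ˣ, f.ker = centralizer {y} := by
  refine ⟨(IsCyclic.mulAutMulEquiv (zpowers y)).toMonoidHom.comp MulAut.conjNormal, ?_⟩
  rw [MonoidHom.ker_comp_of_injective _ _ (MulEquiv.injective _)]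
  ext c
  rw [MonoidHom.mem_ker, mem_centralizer_singleton_iff]
  constructor
  · intro hc
    have hy := congr_arg Subtype.val (DFunLike.congr_fun hc ⟨y, mem_zpowers y⟩)
    rw [MulAut.conjNormal_apply] at hy
    exact mul_inv_eq_iff_eq_mul.mp hy
  · intro hc
    ext ⟨g, hg⟩
    obtain ⟨k, rfl⟩ := mem_zpowers_iff.mp hg
    rw [MulAut.conjNormal_apply]
    exact mul_inv_eq_iff_eq_mul.mpr (Commute.zpow_right hc k).eq

theorem index_centralizer_eq_one_or_eq {G : Type*} [Group G] [Finite G] {p q b : ℕ}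
    [Fact q.Prime] {y : G} (hy : orderOf y = q ^ b) [(zpowers y).Normal]
    (hqy : ¬ q ∣ (centralizer {y}).index)
    (hprimes : ∀ s : ℕ, s.Prime → s ∣ Nat.card G → s = p ∨ s = q)
    (hp2 : ∀ g : G, ¬ p ^ 2 ∣ orderOf g) :
    (centralizer {y}).index = 1 ∨ (centralizer {y}).index = p := by
  obtain ⟨f, hf⟩ := exists_monoidHom_zmod_units_ker_eq_centralizer y
  rw [← hf, index_ker] at hqy ⊢
  have : IsCyclic f.range :=
    ZMod.isCyclic_subgroup_units_of_coprime (by rw [Nat.card_zpowers, hy]) f.range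
    ((Nat.Prime.coprime_iff_not_dvd Fact.out).mpr hqy).symm
  obtain ⟨⟨_, c, rfl⟩, hc⟩ := IsCyclic.exists_ofOrder_eq_natCard (α := f.range)
  have hdvd : Nat.card f.range ∣ orderOf c := by
    rw [← hc, ← Subgroup.orderOf_coe]
    exact orderOf_map_dvd f c
  refine Nat.eq_one_or_eq_of_not_sq_dvd Nat.card_pos.ne' (fun {s} hs hsd ↦ ?_)
    fun hsq ↦ hp2 c (hsq.trans hdvd)
  refine (hprimes s hs (hsd.trans (hdvd.trans (orderOf_dvd_natCard c)))).resolve_right ?_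
  rintro rfl
  exact hqy hsd

theorem Sylow.index_centralizer_eq_one_or_eq {G : Type*} [Group G] [Finite G] {p q : ℕ}
    [Fact q.Prime] (S : Sylow q G) [(S : Subgroup G).Normal] {y : G}
    (hy : (S : Subgroup G) = zpowers y)
    (hprimes : ∀ s : ℕ, s.Prime → s ∣ Nat.card G → s = p ∨ s = q)
    (hp2 : ∀ g : G, ¬ p ^ 2 ∣ orderOf g) :
    (centralizer {y}).index = 1 ∨ (centralizer {y}).index = p := by
  obtain ⟨b, hb⟩ := S.isPGroup'.exists_orderOf_eq_pow_of_mem (hy ▸ mem_zpowers y)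
  have : (zpowers y).Normal := hy ▸ inferInstance
  refine _root_.index_centralizer_eq_one_or_eq hb (fun hq ↦ S.not_dvd_index (hq.trans ?_))
    hprimes hp2
  exact index_dvd_of_le (hy ▸ zpowers_le_of_mem (mem_centralizer_singleton_iff.mpr rfl))

theorem Subgroup.exists_not_powComparable {G : Type*} [Group G] [Finite G] {p : ℕ} (hp : 0 < p)
    (H : Subgroup G) (hH : ∀ z ∈ H, z ≠ 1 → orderOf z = p) (hcard : p < Nat.card H) :
    ∃ z₁ ∈ H, ∃ z₂ ∈ H, orderOf z₁ = p ∧ orderOf z₂ = p ∧ ¬ PowComparable z₁ z₂ := by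
  obtain ⟨z₁, hz₁, hz₁1⟩ : ∃ z ∈ H, z ≠ 1 := by
    by_contra! hH1
    rw [(eq_bot_iff_forall H).mpr hH1, card_bot] at hcard
    omega
  have ho₁ := hH z₁ hz₁ hz₁1
  obtain ⟨z₂, hz₂, hz₂n⟩ : ∃ z₂ ∈ H, z₂ ∉ zpowers z₁ := by
    by_contra! hle
    have := card_le_of_le (hle : H ≤ zpowers z₁)
    rw [Nat.card_zpowers, ho₁] at this
    omega
  have ho₂ := hH z₂ hz₂ fun h1 ↦ hz₂n (h1 ▸ one_mem _)
  refine ⟨z₁, hz₁, z₂, hz₂, ho₁, ho₂, fun h12 ↦ hz₂n (h12.elim (fun h ↦ ?_) id)⟩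
  exact mem_zpowers_of_orderOf_dvd (mem_zpowers z₂) h (by rw [ho₁, ho₂])

namespace pgC4Free

variable {G : Type*} [Group G] [Finite G] (h : pgC4Free G)
include h

theorem dvd_orderOf_mul_of_prime_dvd_card {x z₁ z₂ : G} (hx : x ∈ center G) (hx1 : x ≠ 1)
    (hz₁ : z₁ ∈ center G) (hz₂ : z₂ ∈ center G) (hord : orderOf z₁ = orderOf z₂)
    (hxz : (orderOf x).Coprime (orderOf z₁)) (hz : ¬ PowComparable z₁ z₂) {s : ℕ}
    (hs : s.Prime) (hsG : s ∣ Nat.card G) : s ∣ orderOf x * orderOf z₁ := by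
  by_contra hs_dvd
  have := Fact.mk hs
  obtain ⟨g, hg⟩ := exists_prime_orderOf_dvd_card' s hsG
  have hg1 : g ≠ 1 := fun hg1 ↦ hs.one_lt.ne' (by rw [← hg, hg1, orderOf_one])
  have hxz₂ : (orderOf x).Coprime (orderOf z₂) := hord ▸ hxz
  have hcop (z : G) (hz : z ∈ center G) (hxz : (orderOf x).Coprime (orderOf z))
      (hord : orderOf z = orderOf z₁) : (orderOf g).Coprime (orderOf (x * z)) := by
    rw [(commute_of_mem_center hx z).orderOf_mul_eq_mul_orderOf_of_coprime hxz, hord, hg]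
    exact (Nat.Prime.coprime_iff_not_dvd hs).mpr hs_dvd
  -- `x` lies in both `⟨x * z₁⟩` and `⟨x * z₂⟩`, whose orders are prime to that of `g`
  exact hz <| PowComparable.of_mul_left (commute_of_mem_center hx z₁)
    (commute_of_mem_center hx z₂) hxz hxz₂ <|
    h.powComparable_of_mem_zpowers_of_coprime hg1 hx1
      (((commute_of_mem_center hx g).symm).mul_right (commute_of_mem_center hz₁ g).symm)
      (((commute_of_mem_center hx g).symm).mul_right (commute_of_mem_center hz₂ g).symm)
      (hcop z₁ hz₁ hxz rfl) (hcop z₂ hz₂ hxz₂ hord.symm)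
      ((commute_of_mem_center hx z₁).mem_zpowers_mul_left hxz)
      ((commute_of_mem_center hx z₂).mem_zpowers_mul_left hxz₂)

theorem not_sq_dvd_orderOf {p : ℕ} (hp : p.Prime) {x z₁ z₂ : G} (hx : x ∈ center G)
    (hx1 : x ≠ 1) (hxp : (orderOf x).Coprime p) (hz₁ : z₁ ∈ center G) (hz₂ : z₂ ∈ center G)
    (ho₁ : orderOf z₁ = p) (ho₂ : orderOf z₂ = p) (hz : ¬ PowComparable z₁ z₂) (w : G) :
    ¬ p ^ 2 ∣ orderOf w := by
  intro hw
  have hw' : orderOf (w ^ (orderOf w / p ^ 2)) = p ^ 2 :=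
    orderOf_pow_orderOf_div (orderOf_pos w).ne' hw
  have hmem (z : G) (hz : z ∈ center G) (ho : orderOf z = p) :
      z ∈ zpowers (w ^ (orderOf w / p ^ 2)) :=
    h.mem_zpowers_of_pow_eq_one hp.one_lt le_rfl hw' (ho ▸ pow_orderOf_eq_one z)
      (commute_of_mem_center hz _).symm hx1 (commute_of_mem_center hx _)
      (commute_of_mem_center hx z) hxp
  exact hz (Or.inl (mem_zpowers_of_orderOf_dvd (hmem z₁ hz₁ ho₁) (hmem z₂ hz₂ ho₂)
    (ho₁.trans ho₂.symm).dvd))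

theorem powComparable_of_orderOf_eq_prime_pow {q n : ℕ} (hq : q.Prime) (hn : 2 ≤ n) {x z : G}
    (hx : x ∈ center G) (hxn : orderOf x = q ^ n) (hz : z ∈ center G) (hz1 : z ≠ 1)
    (hzq : (orderOf z).Coprime q) :
    ∀ g₁ g₂ : G, (∃ m, orderOf g₁ = q ^ m) → (∃ m, orderOf g₂ = q ^ m) →
      PowComparable g₁ g₂ := by
  -- every nontrivial `q`-element has a power of order `q`, which lies in `⟨x⟩`; so they all
  -- contain the element `b` of order `q` of `⟨x⟩`, and `z` makes any two of them comparable
  have hdvd {g : G} (hg : ∃ m, orderOf g = q ^ m) (hg1 : g ≠ 1) : q ∣ orderOf g := by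
    obtain ⟨_ | m, hm⟩ := hg
    · exact absurd (orderOf_eq_one_iff.mp (by rw [hm, pow_zero])) hg1
    · exact hm ▸ dvd_pow_self q m.succ_ne_zero
  have hx_q : q ∣ orderOf x := hxn ▸ dvd_pow_self q (by omega)
  have hq_mem {a : G} (ha : a ^ q = 1) : a ∈ zpowers x :=
    h.mem_zpowers_of_pow_eq_one hq.one_lt hn hxn ha (commute_of_mem_center hx a) hz1
      (commute_of_mem_center hz x) (commute_of_mem_center hz a) hzq
  set b := x ^ (orderOf x / q)
  have hb : orderOf b = q := orderOf_pow_orderOf_div (orderOf_pos x).ne' hx_q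
  have hb1 : b ≠ 1 := fun hb1 ↦ hq.one_lt.ne' (by rw [← hb, hb1, orderOf_one])
  have hb_mem {g : G} (hg : ∃ m, orderOf g = q ^ m) (hg1 : g ≠ 1) : b ∈ zpowers g := by
    have hg' := orderOf_pow_orderOf_div (orderOf_pos g).ne' (hdvd hg hg1)
    refine zpowers_le_of_mem (npow_mem_zpowers g _)
      (mem_zpowers_of_orderOf_dvd (npow_mem_zpowers x _) (hq_mem ?_) (by rw [hb, hg']))
    simpa only [hg'] using pow_orderOf_eq_one (g ^ (orderOf g / q))
  have hcop {g : G} (hg : ∃ m, orderOf g = q ^ m) : (orderOf z).Coprime (orderOf g) := by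
    obtain ⟨m, hm⟩ := hg
    exact hm ▸ hzq.pow_right m
  intro g₁ g₂ hg₁ hg₂
  rcases eq_or_ne g₁ 1 with rfl | hg₁1
  · exact Or.inl (one_mem _)
  rcases eq_or_ne g₂ 1 with rfl | hg₂1
  · exact Or.inr (one_mem _)
  exact h.powComparable_of_mem_zpowers_of_coprime hz1 hb1
    (commute_of_mem_center hz g₁) (commute_of_mem_center hz g₂) (hcop hg₁) (hcop hg₂)
    (hb_mem hg₁ hg₁1) (hb_mem hg₂ hg₂1)

theorem prime_dvd_card_iff {p q n : ℕ} (hp : p.Prime) (hq : q.Prime) (hpq : p ≠ q)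
    {x z₁ z₂ : G} (hx : x ∈ center G) (hx1 : x ≠ 1) (hxn : orderOf x = q ^ n)
    (hz₁ : z₁ ∈ center G) (hz₂ : z₂ ∈ center G) (ho₁ : orderOf z₁ = p) (ho₂ : orderOf z₂ = p)
    (hz : ¬ PowComparable z₁ z₂) {s : ℕ} (hs : s.Prime) : s ∣ Nat.card G ↔ s = p ∨ s = q := by
  refine ⟨fun hsG ↦ ?_, ?_⟩
  · have hxz : (orderOf x).Coprime (orderOf z₁) :=
      hxn ▸ ho₁ ▸ ((Nat.coprime_primes hq hp).mpr hpq.symm).pow_left n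
    have hsxz := h.dvd_orderOf_mul_of_prime_dvd_card hx hx1 hz₁ hz₂ (ho₁.trans ho₂.symm) hxz hz
      hs hsG
    rw [hxn, ho₁] at hsxz
    rcases (Nat.Prime.dvd_mul hs).mp hsxz with hsq | hsp
    · exact Or.inr ((Nat.prime_dvd_prime_iff_eq hs hq).mp (hs.dvd_of_dvd_pow hsq))
    · exact Or.inl ((Nat.prime_dvd_prime_iff_eq hs hp).mp hsp)
  · rintro (rfl | rfl)
    · exact ho₁ ▸ orderOf_dvd_natCard z₁
    · have hn : n ≠ 0 := by
        rintro rfl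
        exact hx1 (orderOf_eq_one_iff.mp (hxn.trans (pow_zero s)))
      exact (dvd_pow_self s hn).trans (hxn ▸ orderOf_dvd_natCard x)

theorem structure_of_mem_center {p q n : ℕ} (hp : p.Prime) (hq : q.Prime) (hpq : p ≠ q)
    {x z₁ z₂ : G} (hx : x ∈ center G) (hx1 : x ≠ 1) (hxn : orderOf x = q ^ n)
    (hz₁ : z₁ ∈ center G) (hz₂ : z₂ ∈ center G) (ho₁ : orderOf z₁ = p) (ho₂ : orderOf z₂ = p)
    (hz : ¬ PowComparable z₁ z₂) :
    (∀ s : ℕ, s.Prime → (s ∣ Nat.card G ↔ s = p ∨ s = q)) ∧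
      (q < orderOf x →
        (∀ P : Sylow p G, Monoid.exponent (P : Subgroup G) = p) ∧
        ∀ S : Sylow q G, IsCyclic (S : Subgroup G) ∧ (S : Subgroup G).Normal ∧
          ∀ y : G, (S : Subgroup G) = zpowers y →
            (centralizer {y}).index = 1 ∨ (centralizer {y}).index = p) := by
  have := Fact.mk hp
  have := Fact.mk hq
  have hprimes (s : ℕ) (hs : s.Prime) :=
    h.prime_dvd_card_iff hp hq hpq hx hx1 hxn hz₁ hz₂ ho₁ ho₂ hz hs
  have hp2 := h.not_sq_dvd_orderOf hp hx hx1
    (hxn ▸ ((Nat.coprime_primes hq hp).mpr hpq.symm).pow_left n) hz₁ hz₂ ho₁ ho₂ hz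
  refine ⟨hprimes, fun hqx ↦ ⟨fun P ↦ P.exponent_eq_of_not_sq_dvd ((hprimes p hp).mpr
    (Or.inl rfl)) hp2, fun S ↦ ?_⟩⟩
  have hn : 2 ≤ n := (Nat.pow_lt_pow_iff_right hq.one_lt).mp (by rwa [pow_one, ← hxn])
  have hcomp := h.powComparable_of_orderOf_eq_prime_pow hq hn hx hxn hz₁
    (fun h1 ↦ hp.one_lt.ne' (ho₁ ▸ h1 ▸ orderOf_one)) (ho₁ ▸ (Nat.coprime_primes hp hq).mpr hpq)
  have hS := S.normal_of_forall_powComparable hcomp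
  exact ⟨S.isCyclic_of_forall_powComparable hcomp, hS, fun y hy ↦
    S.index_centralizer_eq_one_or_eq hy (fun s hs ↦ (hprimes s hs).mp) hp2⟩

end pgC4Free

theorem structure_of_center_elementary_abelian_general {G : Type*} [Group G] [Finite G]
    (h : pgC4Free G)
    (p : ℕ) (hp : p.Prime)
    (hZel : ∀ z : G, z ∈ Subgroup.center G → z ≠ 1 → orderOf z = p)
    (hZbig : p < Nat.card (Subgroup.center G)) :
    ∀ q : ℕ, q.Prime → q ≠ p → ∀ x : G, x ≠ 1 → (∃ n : ℕ, orderOf x = q ^ n) →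
      (∀ s : ℕ, s.Prime →
          (s ∣ Nat.card (Subgroup.centralizer ({x} : Set G)) ↔ s = p ∨ s = q)) ∧
      (q < orderOf x →
        (∀ P : Sylow p (Subgroup.centralizer ({x} : Set G)),
            Monoid.exponent (P : Subgroup (Subgroup.centralizer ({x} : Set G))) = p) ∧
        (∀ S : Sylow q (Subgroup.centralizer ({x} : Set G)),
            IsCyclic (S : Subgroup (Subgroup.centralizer ({x} : Set G))) ∧
            (S : Subgroup (Subgroup.centralizer ({x} : Set G))).Normal ∧
            ∀ y : (Subgroup.centralizer ({x} : Set G)),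
              (S : Subgroup (Subgroup.centralizer ({x} : Set G))) = Subgroup.zpowers y →
                (Subgroup.centralizer ({y} :
                    Set (Subgroup.centralizer ({x} : Set G)))).index = 1 ∨
                (Subgroup.centralizer ({y} :
                    Set (Subgroup.centralizer ({x} : Set G)))).index = p)) := by
  intro q hq hqp x hx1 ⟨n, hxn⟩
  obtain ⟨z₁, hz₁, z₂, hz₂, ho₁, ho₂, hz⟩ := (center G).exists_not_powComparable hp.pos hZel hZbig
  set C := centralizer ({x} : Set G)
  have hzC {z : G} (hz : z ∈ center G) : z ∈ C := center_le_centralizer _ hz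
  simpa only [orderOf_mk] using
    (h.of_injective C.subtype_injective).structure_of_mem_center hp hq hqp.symm
    (mk_mem_center_centralizer x) (fun hx1' ↦ hx1 (congr_arg Subtype.val hx1'))
    ((orderOf_mk _ _).trans hxn) (mk_mem_center hz₁ (hzC hz₁)) (mk_mem_center hz₂ (hzC hz₂))
    ((orderOf_mk _ _).trans ho₁) ((orderOf_mk _ _).trans ho₂)
    (fun hc ↦ hz ((powComparable_map_iff C.subtype_injective).mpr hc))

theorem structure_of_center_elementary_abelian {G : Type*} [Group G] [Finite G]
    (h : pgC4Free G) (hG : ¬ IsPrimePow (Nat.card G))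
    (p : ℕ) (hp : p.Prime) (hZp : IsPGroup p (Subgroup.center G))
    (hZel : ∀ z : G, z ∈ Subgroup.center G → z ≠ 1 → orderOf z = p)
    (hZbig : p < Nat.card (Subgroup.center G)) :
    ∀ q : ℕ, q.Prime → q ≠ p → ∀ x : G, x ≠ 1 → (∃ n : ℕ, orderOf x = q ^ n) →
      (∀ s : ℕ, s.Prime →
          (s ∣ Nat.card (Subgroup.centralizer ({x} : Set G)) ↔ s = p ∨ s = q)) ∧
      (q < orderOf x →
        (∀ P : Sylow p (Subgroup.centralizer ({x} : Set G)),
            Monoid.exponent (P : Subgroup (Subgroup.centralizer ({x} : Set G))) = p) ∧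
        (∀ S : Sylow q (Subgroup.centralizer ({x} : Set G)),
            IsCyclic (S : Subgroup (Subgroup.centralizer ({x} : Set G))) ∧
            (S : Subgroup (Subgroup.centralizer ({x} : Set G))).Normal ∧
            ∀ y : (Subgroup.centralizer ({x} : Set G)),
              (S : Subgroup (Subgroup.centralizer ({x} : Set G))) = Subgroup.zpowers y →
                (Subgroup.centralizer ({y} :
                    Set (Subgroup.centralizer ({x} : Set G)))).index = 1 ∨
                (Subgroup.centralizer ({y} :
                    Set (Subgroup.centralizer ({x} : Set G)))).index = p)) :=
  structure_of_center_elementary_abelian_general h p hp hZel hZbig
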